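/- arXiv:0906.5485 — 2 statements merged into one kernel-verified Lean document; each statement's English description precedes it below -/
import Mathlib

section
/- (Ryser's swap connectivity theorem) Any two binary matrices of the same dimensions with identical row sums and identical column sums can be transformed into one another by a finite sequence of local swaps. -/
/-- The local swap of a binary matrix on rows `i, k` and columns `j, l`. -/
def localSwap {m n : ℕ} (A : Matrix (Fin m) (Fin n) ℕ) (i k : Fin m) (j l : Fin n) :
    Matrix (Fin m) (Fin n) ℕ :=
  fun p q =>
    if (p = i ∧ q = j) ∨ (p = k ∧ q = l) then 0
    else if (p = i ∧ q = l) ∨ (p = k ∧ q = j) then 1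
    else A p q

/-- One local-swap step between binary matrices. -/
def SwapStep {m n : ℕ} (A B : Matrix (Fin m) (Fin n) ℕ) : Prop :=
  ∃ (i k : Fin m) (j l : Fin n), i ≠ k ∧ j ≠ l ∧
    A i j = 1 ∧ A k l = 1 ∧ A i l = 0 ∧ A k j = 0 ∧ B = localSwap A i k j l


/-!
Induct on the number of cells in which `A` and `B` differ. Since the entries are `0`/`1` and the
margins agree, every row and every column contains as many cells with `A = 1, B = 0` as with
`A = 0, B = 1`. Take a column `j` containing the fewest, but at least one, cells of the first
kind, one of them `(i, j)`, a cell `(i, l)` of the second kind in row `i`, and a cell `(k, l)` of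
the first kind in column `l`. If every such `k` also had `(k, j)` of the first kind, column `l`
would have strictly fewer of them than column `j` (it misses `i`). So for some `k` either
`A k j = 0`, and the swap of `A` on rows `i, k` and columns `j, l` is legal, or `B k j = 1`, and
the swap of `B` on rows `i, k` and columns `l, j` is legal. Either swap repairs three cells and
spoils at most one, and swaps are reversible.
-/

open Finset Function Matrix

theorem exists_lt_of_sum_eq {ι : Type*} [Fintype ι] {f g : ι → ℕ}
    (hsum : ∑ y, f y = ∑ y, g y) {x : ι} (hx : g x < f x) : ∃ y, f y < g y := by
  by_contra! hle
  exact (sum_lt_sum (fun y _ => hle y) ⟨x, mem_univ x, hx⟩).ne' hsum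

theorem hammingDist_lt_of_two_fixed {ι β : Type*} [Fintype ι] [DecidableEq ι] [DecidableEq β]
    {f f' g : ι → β} {a b d : ι} (hab : a ≠ b) (ha : f a ≠ g a) (hb : f b ≠ g b)
    (ha' : f' a = g a) (hb' : f' b = g b) (hd : ∀ x, x ≠ d → f' x ≠ g x → f x ≠ g x) :
    hammingDist f' g < hammingDist f g := by
  set S : Finset ι := {x | f x ≠ g x}
  have hsub : ({x | f' x ≠ g x} : Finset ι) ⊆ insert d ((S.erase a).erase b) := by
    intro x hx
    simp only [mem_filter, mem_univ, true_and] at hx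
    by_cases hxd : x = d
    · simp [hxd]
    · simp only [mem_insert, mem_erase, S, mem_filter, mem_univ, true_and]
      exact Or.inr ⟨by rintro rfl; exact hx hb', by rintro rfl; exact hx ha', hd x hxd hx⟩
  have haS : a ∈ S := by simp [S, ha]
  have hbS : b ∈ S.erase a := by simp [S, hb, hab.symm]
  calc hammingDist f' g ≤ #((S.erase a).erase b) + 1 :=
        (card_le_card hsub).trans (card_insert_le _ _)
    _ = #(S.erase a) := card_erase_add_one hbS
    _ < #S := card_erase_lt_of_mem haS

structure IsSwapSite {m n : ℕ} (A : Matrix (Fin m) (Fin n) ℕ) (i k : Fin m) (j l : Fin n) :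
    Prop where
  row_ne : i ≠ k
  col_ne : j ≠ l
  one_left : A i j = 1
  one_right : A k l = 1
  zero_left : A i l = 0
  zero_right : A k j = 0

section

variable {m n : ℕ} {A B : Matrix (Fin m) (Fin n) ℕ} {i k : Fin m} {j l : Fin n}

theorem localSwap_le_one (hA : ∀ p q, A p q ≤ 1) (i k : Fin m) (j l : Fin n) (p : Fin m)
    (q : Fin n) : localSwap A i k j l p q ≤ 1 := by
  unfold localSwap
  split_ifs <;> simp [hA p q]

namespace IsSwapSite

theorem swapStep (h : IsSwapSite A i k j l) : SwapStep A (localSwap A i k j l) :=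
  ⟨i, k, j, l, h.row_ne, h.col_ne, h.one_left, h.one_right, h.zero_left, h.zero_right, rfl⟩

theorem reverse (h : IsSwapSite A i k j l) : IsSwapSite (localSwap A i k j l) i k l j := by
  obtain ⟨hik, hjl, hij, hkl, hil, hkj⟩ := h
  constructor <;> grind [localSwap]

theorem localSwap_localSwap (h : IsSwapSite A i k j l) :
    localSwap (localSwap A i k j l) i k l j = A := by
  obtain ⟨hik, hjl, hij, hkl, hil, hkj⟩ := h
  ext p q
  grind [localSwap]

-- `localSwap A = A - E i j - E k l + E i l + E k j`, rearranged to avoid subtraction in `ℕ`.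
theorem localSwap_add_single (h : IsSwapSite A i k j l) :
    localSwap A i k j l + single i j 1 + single k l 1 = A + single i l 1 + single k j 1 := by
  obtain ⟨hik, hjl, hij, hkl, hil, hkj⟩ := h
  ext p q
  simp only [Matrix.add_apply, single_apply, localSwap]
  split_ifs <;> grind

theorem sum_localSwap_row (h : IsSwapSite A i k j l) (p : Fin m) :
    ∑ q, localSwap A i k j l p q = ∑ q, A p q := by
  have := congrArg (fun M : Matrix (Fin m) (Fin n) ℕ => ∑ q, M p q) h.localSwap_add_single
  simp only [Matrix.add_apply, sum_add_distrib, single_apply, ite_and, sum_ite_irrel, sum_ite_eq,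
    mem_univ, ↓reduceIte, sum_const_zero] at this
  omega

theorem sum_localSwap_col (h : IsSwapSite A i k j l) (q : Fin n) :
    ∑ p, localSwap A i k j l p q = ∑ p, A p q := by
  have := congrArg (fun M : Matrix (Fin m) (Fin n) ℕ => ∑ p, M p q) h.localSwap_add_single
  simp only [Matrix.add_apply, sum_add_distrib, single_apply, ite_and, sum_ite_eq, mem_univ,
    ↓reduceIte] at this
  omega

theorem hammingDist_localSwap_lt (h : IsSwapSite A i k j l) (hij : B i j = 0) (hil : B i l = 1)
    (hk : B k l = 0 ∨ B k j = 1) :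
    hammingDist (uncurry (localSwap A i k j l)) (uncurry B) <
      hammingDist (uncurry A) (uncurry B) := by
  obtain ⟨hik, hjl, hij', hkl', hil', hkj'⟩ := h
  have hne : ((i, j) : Fin m × Fin n) ≠ (i, l) := by simp [hjl]
  rcases hk with hkl | hkj
  · refine hammingDist_lt_of_two_fixed (d := (k, j)) hne ?_ ?_ ?_ ?_ (fun ⟨p, q⟩ => ?_) <;>
      grind [localSwap]
  · refine hammingDist_lt_of_two_fixed (d := (k, l)) hne ?_ ?_ ?_ ?_ (fun ⟨p, q⟩ => ?_) <;>
      grind [localSwap]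

end IsSwapSite

theorem SwapStep.symm (h : SwapStep A B) : SwapStep B A := by
  obtain ⟨i, k, j, l, hik, hjl, hij, hkl, hil, hkj, rfl⟩ := h
  have hs : IsSwapSite A i k j l := ⟨hik, hjl, hij, hkl, hil, hkj⟩
  simpa only [hs.localSwap_localSwap] using hs.reverse.swapStep

theorem exists_swap_rectangle_of_ne (hA : ∀ p q, A p q ≤ 1) (hB : ∀ p q, B p q ≤ 1)
    (hrow : ∀ p, ∑ q, A p q = ∑ q, B p q) (hcol : ∀ q, ∑ p, A p q = ∑ p, B p q) (hne : A ≠ B) :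
    ∃ i k j l, A i j = 1 ∧ B i j = 0 ∧ A i l = 0 ∧ B i l = 1 ∧ A k l = 1 ∧ B k l = 0 ∧
      (A k j = 0 ∨ B k j = 1) := by
  classical
  let P : Fin n → Finset (Fin m) := fun c => {p | A p c = 1 ∧ B p c = 0}
  have hP : ∀ {p c}, p ∈ P c ↔ A p c = 1 ∧ B p c = 0 := by simp [P]
  have hpos : ∃ c, (P c).Nonempty := by
    obtain ⟨p, q, hpq⟩ : ∃ p q, A p q ≠ B p q := by
      by_contra! h
      exact hne (Matrix.ext h)
    rcases lt_or_gt_of_ne hpq with hlt | hlt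
    · obtain ⟨p', hp'⟩ := exists_lt_of_sum_eq (hcol q).symm hlt
      exact ⟨q, p', hP.2 (by have := hA p' q; have := hB p' q; omega)⟩
    · exact ⟨q, p, hP.2 (by have := hA p q; have := hB p q; omega)⟩
  obtain ⟨c, hc⟩ := hpos
  obtain ⟨j, hj, hmin⟩ := exists_min_image {c | (P c).Nonempty} (fun c => #(P c))
    ⟨c, mem_filter.2 ⟨mem_univ c, hc⟩⟩
  obtain ⟨i, hi⟩ := (mem_filter.1 hj).2
  obtain ⟨hij, hij'⟩ := hP.1 hi
  obtain ⟨l, hl⟩ := exists_lt_of_sum_eq (hrow i) (show B i j < A i j by omega)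
  have hil : A i l = 0 ∧ B i l = 1 := by have := hB i l; omega
  obtain ⟨k, hk⟩ := exists_lt_of_sum_eq (hcol l).symm (show A i l < B i l by omega)
  have hkl : A k l = 1 ∧ B k l = 0 := by have := hA k l; omega
  by_contra! hnone
  have hsub : P l ⊂ P j := by
    refine (ssubset_iff_of_subset fun r hr => ?_).2
      ⟨i, hi, fun h => by have := (hP.1 h).1; omega⟩
    obtain ⟨hrl, hrl'⟩ := hP.1 hr
    have := hnone i r j l hij hij' hil.1 hil.2 hrl hrl'
    exact hP.2 (by have := hA r j; have := hB r j; omega)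
  exact (hmin l (mem_filter.2 ⟨mem_univ l, k, hP.2 hkl⟩)).not_gt (card_lt_card hsub)

theorem reflTransGen_swapStep_of_sum_eq (hA : ∀ p q, A p q ≤ 1) (hB : ∀ p q, B p q ≤ 1)
    (hrow : ∀ p, ∑ q, A p q = ∑ q, B p q) (hcol : ∀ q, ∑ p, A p q = ∑ p, B p q) :
    Relation.ReflTransGen SwapStep A B := by
  induction hd : hammingDist (uncurry A) (uncurry B) using Nat.strong_induction_on
    generalizing A B with
  | _ d ih =>
  by_cases hAB : A = B
  · exact hAB ▸ .refl
  obtain ⟨i, k, j, l, hij, hij', hil, hil', hkl, hkl', hkj | hkj'⟩ :=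
    exists_swap_rectangle_of_ne hA hB hrow hcol hAB
  · have hs : IsSwapSite A i k j l := ⟨by grind, by grind, hij, hkl, hil, hkj⟩
    have hlt := hs.hammingDist_localSwap_lt hij' hil' (.inl hkl')
    refine .head hs.swapStep (ih _ (hd ▸ hlt) (localSwap_le_one hA i k j l) hB
      (fun p => (hs.sum_localSwap_row p).trans (hrow p))
      (fun q => (hs.sum_localSwap_col q).trans (hcol q)) rfl)
  · have hs : IsSwapSite B i k l j := ⟨by grind, by grind, hil', hkj', hij', hkl'⟩
    have hlt := hs.hammingDist_localSwap_lt hil hij (.inr hkl)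
    rw [hammingDist_comm, hammingDist_comm (uncurry B)] at hlt
    refine .tail (ih _ (hd ▸ hlt) hA (localSwap_le_one hB i k l j)
      (fun p => (hrow p).trans (hs.sum_localSwap_row p).symm)
      (fun q => (hcol q).trans (hs.sum_localSwap_col q).symm) rfl) hs.swapStep.symm

end

/-- Ryser's swap connectivity theorem. -/
theorem ryser_swap_connectivity (m n : ℕ) (A B : Matrix (Fin m) (Fin n) ℕ)
    (hA : ∀ i j, A i j = 0 ∨ A i j = 1) (hB : ∀ i j, B i j = 0 ∨ B i j = 1)
    (hrow : ∀ i, ∑ j, A i j = ∑ j, B i j)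
    (hcol : ∀ j, ∑ i, A i j = ∑ i, B i j) :
    Relation.ReflTransGen SwapStep A B :=
  reflTransGen_swapStep_of_sum_eq (fun i j => by rcases hA i j with h | h <;> omega)
    (fun i j => by rcases hB i j with h | h <;> omega) hrow hcol
end

section
/- If B is a one-to-one relation (a permutation matrix), then {A · B' : B' has the same row and column sums as B} = {column permutations of A}, i.e., A · sw(B) = cp(A), where · is the boolean matrix product. -/
/-!
Every matrix in `sw(B)` for a permutation matrix `B` is a {0,1}-matrix with all row and column
sums equal to one, hence itself a permutation matrix `τ.permMatrix`; conversely every permutation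
matrix lies in `sw(B)`. For a {0,1}-matrix `A`, the boolean product with `τ.permMatrix` just moves
column `τ⁻¹ k` of `A` to position `k`.
-/

/-- Boolean matrix product of {0,1}-valued natural-number matrices. -/
def boolProd {n m k : ℕ} (A : Matrix (Fin n) (Fin m) ℕ) (B : Matrix (Fin m) (Fin k) ℕ) :
    Matrix (Fin n) (Fin k) ℕ :=
  fun i l => if ∃ j, A i j = 1 ∧ B j l = 1 then 1 else 0

open Equiv Finset

section
variable {ι : Type*} [Fintype ι] [DecidableEq ι]

lemma Matrix.sum_permMatrix_row {R : Type*} [AddCommMonoidWithOne R] (σ : Perm ι) (j : ι) :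
    ∑ k, σ.permMatrix R j k = 1 := by
  simp

lemma Matrix.sum_permMatrix_col {R : Type*} [AddCommMonoidWithOne R] (σ : Perm ι) (k : ι) :
    ∑ j, σ.permMatrix R j k = 1 := by
  simp [← Equiv.eq_symm_apply]

lemma exists_eq_ite_of_sum_eq_one {f : ι → ℕ} (h01 : ∀ i, f i = 0 ∨ f i = 1)
    (hsum : ∑ i, f i = 1) : ∃ a, ∀ i, f i = if a = i then 1 else 0 := by
  have hf : ∀ i, f i = if f i = 1 then 1 else 0 := by
    intro i; rcases h01 i with h | h <;> simp [h]
  rw [sum_congr rfl fun i _ => hf i, sum_boole, Nat.cast_id, card_eq_one] at hsum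
  obtain ⟨a, ha⟩ := hsum
  refine ⟨a, fun i => ?_⟩
  have hi : f i = 1 ↔ a = i := by simpa [eq_comm] using Finset.ext_iff.mp ha i
  rw [hf i]
  exact if_congr hi rfl rfl

lemma Matrix.exists_perm_eq_permMatrix {M : Matrix ι ι ℕ} (h01 : ∀ j k, M j k = 0 ∨ M j k = 1)
    (hrow : ∀ j, ∑ k, M j k = 1) (hcol : ∀ k, ∑ j, M j k = 1) :
    ∃ σ : Perm ι, M = σ.permMatrix ℕ := by
  choose σ hσ using fun j => exists_eq_ite_of_sum_eq_one (h01 j) (hrow j)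
  have hinj : Function.Injective σ := by
    intro a b hab
    obtain ⟨c, hc⟩ := exists_eq_ite_of_sum_eq_one (fun j => h01 j (σ a)) (hcol (σ a))
    have hca : c = a := by simpa [hσ] using hc a
    have hcb : c = b := by simpa [hσ, hab] using hc b
    exact hca.symm.trans hcb
  refine ⟨Equiv.ofBijective σ hinj.bijective_of_finite, ?_⟩
  ext j k
  simp [hσ, toPEquiv_apply]

end

lemma boolProd_permMatrix {n m : ℕ} {A : Matrix (Fin n) (Fin m) ℕ}
    (hA : ∀ i j, A i j = 0 ∨ A i j = 1) (σ : Perm (Fin m)) :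
    boolProd A (σ.permMatrix ℕ) = fun i k => A i (σ⁻¹ k) := by
  funext i k
  have hsupp : (∃ j, A i j = 1 ∧ σ.permMatrix ℕ j k = 1) ↔ A i (σ⁻¹ k) = 1 := by
    simp [Perm.inv_def, ← eq_symm_apply]
  unfold boolProd
  rw [if_congr hsupp rfl rfl]
  rcases hA i (σ⁻¹ k) with h | h <;> rw [h] <;> rfl

theorem mul_sw_perm_eq_col_perms (n m : ℕ)
    (A : Matrix (Fin n) (Fin m) ℕ) (hA : ∀ i j, A i j = 0 ∨ A i j = 1)
    (B : Matrix (Fin m) (Fin m) ℕ)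
    (hB : ∃ σ : Equiv.Perm (Fin m), ∀ j k, B j k = if k = σ j then 1 else 0) :
    {C : Matrix (Fin n) (Fin m) ℕ |
        ∃ B' : Matrix (Fin m) (Fin m) ℕ,
          (∀ j k, B' j k = 0 ∨ B' j k = 1) ∧
          (∀ j, ∑ k, B' j k = ∑ k, B j k) ∧
          (∀ k, ∑ j, B' j k = ∑ j, B j k) ∧
          C = boolProd A B'} =
      {C : Matrix (Fin n) (Fin m) ℕ |
        ∃ τ : Equiv.Perm (Fin m), C = fun i j => A i (τ j)} := by
  obtain ⟨σ, hσ⟩ := hB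
  obtain rfl : B = σ.permMatrix ℕ := by
    ext j k
    simp [hσ, toPEquiv_apply, eq_comm]
  ext C
  constructor
  · rintro ⟨B', h01, hrow, hcol, rfl⟩
    simp only [Matrix.sum_permMatrix_row, Matrix.sum_permMatrix_col] at hrow hcol
    obtain ⟨τ, rfl⟩ := Matrix.exists_perm_eq_permMatrix h01 hrow hcol
    exact ⟨τ⁻¹, boolProd_permMatrix hA τ⟩
  · rintro ⟨τ, rfl⟩
    refine ⟨τ⁻¹.permMatrix ℕ, fun j k => ?_, ?_, ?_, ?_⟩
    · simp only [PEquiv.toMatrix_apply]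
      split_ifs <;> simp
    · simp only [Matrix.sum_permMatrix_row, implies_true]
    · simp only [Matrix.sum_permMatrix_col, implies_true]
    · rw [boolProd_permMatrix hA, inv_inv]
end
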